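/- arXiv:1902.10971 — 3 statements merged into one kernel-verified Lean document; each statement's English description precedes it below -/
import Mathlib

section
/- For any indexed container w over I and predicates X, Y over I, if X ∪ ⟦w⟧(Y) ⊆ Y then ⟦w*⟧(X) ⊆ Y: from a function Π i, (X i ⊕ ⟦w⟧(Y) i) → Y i one can construct a function Π i, ⟦w*⟧(X) i → Y i. -/
/-- An indexed container over `I`: actions, reactions, next state. -/
structure ICont (I : Type) where
  A : I → Type
  D : ∀ i, A i → Type
  n : ∀ i, ∀ a : A i, D i a → I

/-- The extension of an indexed container, a monotone operator on predicates. -/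
def IExt {I : Type} (w : ICont I) (X : I → Type) (i : I) : Type :=
  Σ a : w.A i, ∀ d : w.D i a, X (w.n i a d)

/-- Actions of the free monad container: well-founded trees of actions. -/
inductive Astar {I : Type} (w : ICont I) : I → Type where
  | leaf (i : I) : Astar w i
  | node (i : I) (a : w.A i) (k : ∀ d : w.D i a, Astar w (w.n i a d)) : Astar w i

/-- Reactions of the free monad container: leaves of such a tree. -/
def Dstar {I : Type} (w : ICont I) : ∀ i : I, Astar w i → Type
  | _, .leaf _ => PUnit
  | i, .node _ a k => Σ d : w.D i a, Dstar w (w.n i a d) (k d)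

/-- Next-state of the free monad container: state at a leaf. -/
def nstar {I : Type} (w : ICont I) : ∀ (i : I) (α : Astar w i), Dstar w i α → I
  | i, .leaf _, _ => i
  | i, .node _ a k, ⟨d, d'⟩ => nstar w (w.n i a d) (k d) d'

/-- The free monad indexed container `w*`. -/
def wstar {I : Type} (w : ICont I) : ICont I := ⟨Astar w, Dstar w, nstar w⟩

def foldAux {I : Type} (w : ICont I) (X Y : I → Type)
    (h : ∀ i, (X i ⊕ IExt w Y i) → Y i) :
    ∀ (i : I) (α : Astar w i), (∀ d : Dstar w i α, X (nstar w i α d)) → Y i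
  | i, .leaf _, f => h i (Sum.inl (f PUnit.unit))
  | i, .node _ a k, f =>
    h i (Sum.inr ⟨a, fun d => foldAux w X Y h (w.n i a d) (k d) (fun d' => f ⟨d, d'⟩)⟩)

/-- The free monad extension is the least prefixed point:
if `X ∪ ⟦w⟧(Y) ⊆ Y` then `⟦w*⟧(X) ⊆ Y`. -/
theorem wstar_fold {I : Type} (w : ICont I) (X Y : I → Type)
    (h : ∀ i, (X i ⊕ IExt w Y i) → Y i) :
    Nonempty (∀ i, IExt (wstar w) X i → Y i) := by
  exact ⟨fun i p => foldAux w X Y h i p.1 p.2⟩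
end

section
/- For any indexed container w over I, the monotonicity/execution lemma of formal topology holds: given i : I with an element of ⟦w*⟧(X)(i) and an element of ν(w^⊥)(i), one can construct an index j : I together with an element of X j and an element of ν(w^⊥)(j). In other words, ⟦w*⟧(X) ≬ ν(w^⊥) → X ≬ ν(w^⊥). -/
/-- The extension of the dual container `w^⊥` (in its equivalent
`Π a, Σ d` form): `⟦w^⊥⟧(X)(i) = Π a : A i, Σ d : D i a, X (i[a/d])`. -/
def DExt {I : Type} (w : ICont I) (X : I → Type) (i : I) : Type :=
  ∀ a : w.A i, Σ d : w.D i a, X (w.n i a d)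

def wstar_aux {I : Type} (w : ICont I) (X : I → Type)
    (νb : I → Type) (elim : ∀ i, νb i → DExt w νb i) :
    ∀ (i : I) (α : Astar w i), (∀ d : Dstar w i α, X (nstar w i α d)) → νb i →
      Σ j : I, X j × νb j
  | i, .leaf _, k, b => ⟨i, k PUnit.unit, b⟩
  | i, .node _ a t, k, b =>
    let ⟨d, b'⟩ := elim i b a
    wstar_aux w X νb elim (w.n i a d) (t d) (fun d' => k ⟨d, d'⟩) b'

/-- The monotonicity/execution lemma of formal topology: from
`⟦w*⟧(X) ≬ ν(w^⊥)` one can construct `X ≬ ν(w^⊥)`. The greatest fixed point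
`ν(w^⊥)` is given by any family `νb` equipped with the unfolding (destructor)
`νb ⊆ ⟦w^⊥⟧(νb)`. -/
theorem wstar_execution {I : Type} (w : ICont I) (X : I → Type)
    (νb : I → Type) (elim : ∀ i, νb i → DExt w νb i) :
    Nonempty ((Σ i : I, IExt (wstar w) X i × νb i) → Σ j : I, X j × νb j) := by
  exact ⟨fun ⟨i, ⟨α, k⟩, b⟩ => wstar_aux w X νb elim i α k b⟩
end

section
/- For indexed containers w₁, w₂ over I₁, I₂, every linear simulation R from w₁ to w₂ admits an evaluation function: given i₁ : I₁, i₂ : I₂, a proof of R(i₁,i₂), and an element of ν(w₁^⊥)(i₁), one can construct an element of ν(w₂^⊥)(i₂). -/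
/-- The data making a relation `R` a linear simulation from `w₁` to `w₂`. -/
def IsLinSim {I₁ I₂ : Type} (w₁ : ICont I₁) (w₂ : ICont I₂)
    (R : I₁ → I₂ → Type) : Type :=
  ∀ i₁ i₂, R i₁ i₂ → ∀ a₂ : w₂.A i₂, Σ a₁ : w₁.A i₁, ∀ d₁ : w₁.D i₁ a₁,
    Σ d₂ : w₂.D i₂ a₂, R (w₁.n i₁ a₁ d₁) (w₂.n i₂ a₂ d₂)

/-- Evaluation of a linear simulation: a linear simulation `R : w₁ ⊸ w₂`
yields, for related states, a function `ν(w₁^⊥)(i₁) → ν(w₂^⊥)(i₂)`.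
The coinductive types are given by families with destructor (elim) and
corecursor (intro) for the functors `⟦w₁^⊥⟧` and `⟦w₂^⊥⟧`. -/
theorem eval_linear {I₁ I₂ : Type} (w₁ : ICont I₁) (w₂ : ICont I₂)
    (R : I₁ → I₂ → Type) (ρ : IsLinSim w₁ w₂ R)
    (ν₁ : I₁ → Type) (elim₁ : ∀ i, ν₁ i → DExt w₁ ν₁ i)
    (intro₁ : ∀ X : I₁ → Type, (∀ i, X i → DExt w₁ X i) → ∀ i, X i → ν₁ i)
    (ν₂ : I₂ → Type) (elim₂ : ∀ i, ν₂ i → DExt w₂ ν₂ i)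
    (intro₂ : ∀ X : I₂ → Type, (∀ i, X i → DExt w₂ X i) → ∀ i, X i → ν₂ i) :
    Nonempty (∀ i₁ i₂, R i₁ i₂ → ν₁ i₁ → ν₂ i₂) := by
  constructor
  intro i₁ i₂ r x
  refine intro₂ (fun j₂ => Σ j₁ : I₁, R j₁ j₂ × ν₁ j₁) ?_ i₂ ⟨i₁, r, x⟩
  rintro j₂ ⟨j₁, r', y⟩ a₂
  obtain ⟨a₁, f⟩ := ρ j₁ j₂ r' a₂
  obtain ⟨d₁, y'⟩ := elim₁ j₁ y a₁
  obtain ⟨d₂, r''⟩ := f d₁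
  exact ⟨d₂, w₁.n j₁ a₁ d₁, r'', y'⟩
end
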